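/- For all integers n ≥ 0, 2·C_n(1/2) = L_{2n}, where L denotes the Lucas numbers. -/

import Mathlib

def C (x : ℝ) : ℕ → ℝ
  | 0 => 1
  | 1 => 3 * x
  | n + 2 => 6 * x * C x (n + 1) - C x n

def lucas : ℕ → ℕ
  | 0 => 2
  | 1 => 1
  | n + 2 => lucas (n + 1) + lucas n

/- Both sides satisfy `a (n + 2) = 3 a (n + 1) - a n` with the same initial values `2` and `3`:
at `x = 1/2` the recurrence of `C` has coefficient `6x = 3`, and two Fibonacci steps give
`L (m + 4) = 3 L (m + 2) - L m` for the even-indexed Lucas numbers. -/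

lemma lucas_add_four_add (n : ℕ) : lucas (n + 4) + lucas n = 3 * lucas (n + 2) := by
  simp only [lucas]
  omega

lemma C_half_add_two (n : ℕ) : C (1 / 2) (n + 2) = 3 * C (1 / 2) (n + 1) - C (1 / 2) n := by
  rw [C]
  norm_num

theorem stmt12 (n : ℕ) : 2 * C (1 / 2) n = lucas (2 * n) := by
  induction n using Nat.twoStepInduction with
  | zero => norm_num [C, lucas]
  | one => norm_num [C, lucas]
  | more n ih ih' =>
    have hL : (lucas (2 * n + 4) : ℝ) + lucas (2 * n) = 3 * lucas (2 * n + 2) := by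
      exact_mod_cast lucas_add_four_add (2 * n)
    rw [C_half_add_two, show 2 * (n + 2) = 2 * n + 4 by ring]
    rw [show 2 * (n + 1) = 2 * n + 2 by ring] at ih'
    linarith
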